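/- Let G be a countable group, μ an irreducible probability measure on G with μ(e) > 0, H ≤ G a subgroup of infinite index, and F ⊆ G a finite subset. Let (w_n) be the μ-random walk on G started at the identity (w_n = g_1⋯g_n with g_i i.i.d. of law μ). Then ℙ(w_n ∈ HF) → 0 as n → ∞. -/

import Mathlib

open MeasureTheory ProbabilityTheory Filter
open scoped ENNReal

/-- The random walk `w_n = g_1 ⋯ g_n` with increments `inc i` (for `i ≥ 1`), `w_0 = e`. -/
def walk {G Ω : Type*} [Group G] (inc : ℕ → Ω → G) (ω : Ω) : ℕ → G
  | 0 => 1
  | n + 1 => walk inc ω n * inc (n + 1) ω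

lemma cs_aux {G X : Type*} (v : G → ℝ) (hv0 : ∀ s, 0 ≤ v s) (c : ℝ) (hv : HasSum v c)
    (u : G → X → ℝ) (hu0 : ∀ s x, 0 ≤ u s x) (hu1 : ∀ s x, u s x ≤ 1)
    (A : ℝ) (hA0 : 0 ≤ A) (hA : ∀ s, ∀ T : Finset X, ∑ x ∈ T, (u s x)^2 ≤ A) :
    ∀ T : Finset X, ∑ x ∈ T, (∑' s, v s * u s x)^2 ≤ c * (c * A) := by
  have hvsummable : Summable v := hv.summable
  have hc0 : 0 ≤ c := hv.tsum_eq ▸ tsum_nonneg hv0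
  have hnn1 : ∀ s (x : X), 0 ≤ v s * u s x := fun s x => mul_nonneg (hv0 s) (hu0 s x)
  have hnn2 : ∀ s (x : X), 0 ≤ v s * (u s x)^2 := fun s x => mul_nonneg (hv0 s) (sq_nonneg _)
  have hle1 : ∀ s (x : X), v s * u s x ≤ v s :=
    fun s x => mul_le_of_le_one_right (hv0 s) (hu1 s x)
  have hle2 : ∀ s (x : X), v s * (u s x)^2 ≤ v s :=
    fun s x => mul_le_of_le_one_right (hv0 s) (pow_le_one₀ (hu0 s x) (hu1 s x))
  have hsum_vu2 : ∀ x, Summable (fun s => v s * (u s x)^2) := fun x =>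
    hvsummable.of_nonneg_of_le (fun s => hnn2 s x) (fun s => hle2 s x)
  have hsum_vu : ∀ x, Summable (fun s => v s * u s x) := fun x =>
    hvsummable.of_nonneg_of_le (fun s => hnn1 s x) (fun s => hle1 s x)
  have htsum2nn : ∀ x, (0:ℝ) ≤ ∑' s, v s * (u s x)^2 := fun x => tsum_nonneg (fun s => hnn2 s x)
  -- pointwise Cauchy-Schwarz
  have hpt : ∀ x, (∑' s, v s * u s x)^2 ≤ c * ∑' s, v s * (u s x)^2 := by
    intro x
    have h1 : ∑' s, v s * u s x ≤ Real.sqrt (c * ∑' s, v s * (u s x)^2) := by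
      refine Summable.tsum_le_of_sum_le (hsum_vu x) (fun Q => ?_)
      have hcs : (∑ s ∈ Q, v s * u s x)^2 ≤ (∑ s ∈ Q, v s) * ∑ s ∈ Q, v s * (u s x)^2 := by
        have key := Finset.sum_mul_sq_le_sq_mul_sq Q (fun s => Real.sqrt (v s))
          (fun s => Real.sqrt (v s) * u s x)
        have e1 : ∀ s, Real.sqrt (v s) * (Real.sqrt (v s) * u s x) = v s * u s x := by
          intro s; rw [← mul_assoc, Real.mul_self_sqrt (hv0 s)]
        have e2 : ∀ s, (Real.sqrt (v s))^2 = v s := fun s => Real.sq_sqrt (hv0 s)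
        have e3 : ∀ s, (Real.sqrt (v s) * u s x)^2 = v s * (u s x)^2 := by
          intro s; rw [mul_pow, e2]
        calc (∑ s ∈ Q, v s * u s x)^2
            = (∑ s ∈ Q, Real.sqrt (v s) * (Real.sqrt (v s) * u s x))^2 := by
              congr 1; exact Finset.sum_congr rfl (fun s _ => (e1 s).symm)
          _ ≤ (∑ s ∈ Q, (Real.sqrt (v s))^2) * ∑ s ∈ Q, (Real.sqrt (v s) * u s x)^2 := key
          _ = (∑ s ∈ Q, v s) * ∑ s ∈ Q, v s * (u s x)^2 := by
              congr 1
              · exact Finset.sum_congr rfl (fun s _ => e2 s)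
              · exact Finset.sum_congr rfl (fun s _ => e3 s)
      have h2 : (∑ s ∈ Q, v s) ≤ c := sum_le_hasSum Q (fun s _ => hv0 s) hv
      have h3 : ∑ s ∈ Q, v s * (u s x)^2 ≤ ∑' s, v s * (u s x)^2 :=
        Summable.sum_le_tsum Q (fun s _ => hnn2 s x) (hsum_vu2 x)
      have h4 : (∑ s ∈ Q, v s * u s x)^2 ≤ c * ∑' s, v s * (u s x)^2 := by
        refine hcs.trans ?_
        have hQ0 : 0 ≤ ∑ s ∈ Q, v s * (u s x)^2 :=
          Finset.sum_nonneg (fun s _ => hnn2 s x)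
        have hQv0 : 0 ≤ ∑ s ∈ Q, v s := Finset.sum_nonneg (fun s _ => hv0 s)
        nlinarith
      calc ∑ s ∈ Q, v s * u s x = Real.sqrt ((∑ s ∈ Q, v s * u s x)^2) := by
            rw [Real.sqrt_sq (Finset.sum_nonneg (fun s _ => hnn1 s x))]
        _ ≤ Real.sqrt (c * ∑' s, v s * (u s x)^2) := Real.sqrt_le_sqrt h4
    have hnn : 0 ≤ ∑' s, v s * u s x := tsum_nonneg (fun s => hnn1 s x)
    have hR : 0 ≤ c * ∑' s, v s * (u s x)^2 := mul_nonneg hc0 (htsum2nn x)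
    calc (∑' s, v s * u s x)^2 ≤ (Real.sqrt (c * ∑' s, v s * (u s x)^2))^2 :=
          pow_le_pow_left₀ hnn h1 2
      _ = c * ∑' s, v s * (u s x)^2 := Real.sq_sqrt hR
  intro T
  have hswap : ∑ x ∈ T, ∑' s, v s * (u s x)^2 = ∑' s, ∑ x ∈ T, v s * (u s x)^2 :=
    (Summable.tsum_finsetSum (fun x _ => hsum_vu2 x)).symm
  have hbd : ∑' s, ∑ x ∈ T, v s * (u s x)^2 ≤ c * A := by
    have h1 : ∀ s, ∑ x ∈ T, v s * (u s x)^2 ≤ v s * A := by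
      intro s
      rw [← Finset.mul_sum]
      exact mul_le_mul_of_nonneg_left (hA s T) (hv0 s)
    have hsummable1 : Summable (fun s => ∑ x ∈ T, v s * (u s x)^2) :=
      (hvsummable.mul_right A).of_nonneg_of_le
        (fun s => Finset.sum_nonneg (fun x _ => hnn2 s x)) h1
    calc ∑' s, ∑ x ∈ T, v s * (u s x)^2 ≤ ∑' s, v s * A :=
          Summable.tsum_le_tsum h1 hsummable1 (hvsummable.mul_right A)
      _ = c * A := by rw [tsum_mul_right, hv.tsum_eq]
  calc ∑ x ∈ T, (∑' s, v s * u s x)^2 ≤ ∑ x ∈ T, c * ∑' s, v s * (u s x)^2 :=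
        Finset.sum_le_sum (fun x _ => hpt x)
    _ = c * ∑ x ∈ T, ∑' s, v s * (u s x)^2 := by rw [Finset.mul_sum]
    _ ≤ c * (c * A) := by
        rw [hswap]
        exact mul_le_mul_of_nonneg_left hbd hc0

open Filter in
lemma core_decay {G X : Type*} [Group G] [Infinite X]
    (r : G → X → X)
    (hr_mul : ∀ g g' x, r g' (r g x) = r (g * g') x)
    (hr_one : ∀ x, r 1 x = x)
    (htrans : ∀ x y : X, ∃ g, r g x = y)
    (w : G → ℝ) (hw0 : ∀ s, 0 ≤ w s) (hwsum : HasSum w 1)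
    (hirr : Subgroup.closure {s | w s ≠ 0} = ⊤) (hε : 0 < w 1)
    (h : ℕ → X → ℝ) (hh0 : ∀ n x, 0 ≤ h n x)
    (hh1 : ∀ n x, h n x ≤ 1)
    (hfin : ∀ n (T : Finset X), ∑ x ∈ T, h n x ≤ 1)
    (hrec : ∀ n x, h (n+1) x = ∑' s, w s * h n (r s⁻¹ x))
    (x0 : X) : Tendsto (fun n => h n x0) atTop (nhds 0) := by
  classical
  -- basic facts about the action
  have hrinv : ∀ (g : G) (x : X), r g⁻¹ (r g x) = x := by
    intro g x; rw [hr_mul, mul_inv_cancel, hr_one]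
  have hrinv' : ∀ (g : G) (x : X), r g (r g⁻¹ x) = x := by
    intro g x; rw [hr_mul, inv_mul_cancel, hr_one]
  have hrinj : ∀ g : G, Function.Injective (r g) := by
    intro g a b hab
    have := congrArg (r g⁻¹) hab
    rwa [hrinv, hrinv] at this
  -- ε < 1
  have hε1 : w 1 < 1 := by
    have hle1 : w 1 ≤ 1 := by
      simpa using sum_le_hasSum {1} (fun s _ => hw0 s) hwsum
    rcases lt_or_eq_of_le hle1 with hlt | heq
    · exact hlt
    · exfalso
      have hothers : ∀ s : G, s ≠ 1 → w s = 0 := by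
        intro s hs
        have hle : w 1 + w s ≤ 1 := by
          have := sum_le_hasSum ({1, s} : Finset G) (fun t _ => hw0 t) hwsum
          rwa [Finset.sum_pair (Ne.symm hs)] at this
        have := hw0 s
        linarith [heq.symm ▸ hle]
      have hsub : {s : G | w s ≠ 0} ⊆ ((⊥ : Subgroup G) : Set G) := by
        intro s hs
        simp only [Subgroup.coe_bot, Set.mem_singleton_iff]
        by_contra hne
        exact hs (hothers s hne)
      have htop : (⊤ : Subgroup G) ≤ ⊥ := hirr ▸ (Subgroup.closure_le ⊥).mpr hsub
      have hall : ∀ g : G, g = 1 := fun g => Subgroup.mem_bot.mp (htop (Subgroup.mem_top g))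
      have : Subsingleton X := ⟨fun x y => by
        obtain ⟨g, hg⟩ := htrans x y
        rw [hall g, hr_one] at hg
        exact hg⟩
      exact (not_subsingleton X) this
  set ε : ℝ := w 1 with hεdef
  have hsummable : ∀ n, Summable (h n) := fun n => summable_of_sum_le (hh0 n) (hfin n)
  have hsq : ∀ n, Summable (fun x => (h n x)^2) := by
    intro n
    refine (hsummable n).of_nonneg_of_le (fun x => sq_nonneg _) (fun x => ?_)
    nlinarith [hh0 n x, hh1 n x]
  set N : ℕ → ℝ := fun n => ∑' x, (h n x)^2 with hNdef
  have hN0 : ∀ n, 0 ≤ N n := fun n => tsum_nonneg (fun x => sq_nonneg _)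
  have hsum_wu : ∀ n x, Summable (fun s => w s * h n (r s⁻¹ x)) := by
    intro n x
    refine hwsum.summable.of_nonneg_of_le
      (fun s => mul_nonneg (hw0 s) (hh0 _ _)) (fun s => ?_)
    exact mul_le_of_le_one_right (hw0 s) (hh1 _ _)
  have huA : ∀ n (s : G) (T : Finset X), ∑ x ∈ T, (h n (r s⁻¹ x))^2 ≤ N n := by
    intro n s T
    have himg : ∑ x ∈ T, (h n (r s⁻¹ x))^2 = ∑ y ∈ T.image (r s⁻¹), (h n y)^2 :=
      (Finset.sum_image (f := fun y => (h n y)^2) (fun x _ y _ hxy => hrinj s⁻¹ hxy)).symm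
    rw [himg]
    exact Summable.sum_le_tsum _ (fun x _ => sq_nonneg _) (hsq n)
  -- the two key per-step facts
  have keyA : ∀ n, N (n + 1) ≤ N n := by
    intro n
    have hparts : ∀ T : Finset X, ∑ x ∈ T, (h (n+1) x)^2 ≤ 1 * (1 * N n) := by
      intro T
      have := cs_aux w hw0 1 hwsum (fun s x => h n (r s⁻¹ x))
        (fun s x => hh0 _ _) (fun s x => hh1 _ _) (N n) (hN0 n) (huA n) T
      calc ∑ x ∈ T, (h (n+1) x)^2 = ∑ x ∈ T, (∑' s, w s * h n (r s⁻¹ x))^2 :=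
            Finset.sum_congr rfl (fun x _ => by rw [hrec])
        _ ≤ 1 * (1 * N n) := this
    have := Summable.tsum_le_of_sum_le (hsq (n+1)) (fun T => hparts T)
    simpa using this
  have keyB : ∀ n x, (h (n+1) x - h n x)^2 ≤ ((1-ε)/ε) * (N n - N (n+1)) := by
    intro n x₁
    set a : X → ℝ := h n with hadef
    set b : X → ℝ := fun x => (h (n+1) x - ε * a x)/(1-ε) with hbdef
    have h1ε : (0:ℝ) < 1 - ε := by linarith
    have hblow : ∀ x, ε * a x ≤ h (n+1) x := by
      intro x
      rw [hrec]
      have := Summable.le_tsum (hsum_wu n x) 1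
        (fun s _ => mul_nonneg (hw0 s) (hh0 _ _))
      simpa [inv_one, hr_one] using this
    have hb0 : ∀ x, 0 ≤ b x := fun x =>
      div_nonneg (by linarith [hblow x]) h1ε.le
    have hbid : ∀ x, h (n+1) x = ε * a x + (1-ε) * b x := by
      intro x
      show h (n+1) x = ε * a x + (1-ε) * ((h (n+1) x - ε * a x)/(1-ε))
      rw [mul_div_assoc', mul_div_cancel_left₀ _ h1ε.ne']; ring
    -- b is a (1-ε)-weighted average of shifts of a
    set w' : G → ℝ := fun s => if s = 1 then 0 else w s with hw'def
    have hw'0 : ∀ s, 0 ≤ w' s := by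
      intro s; by_cases hs : s = 1 <;> simp [hw'def, hs, hw0 s]
    have hw'sum : HasSum w' (1 - ε) := by
      have h0 := hwsum.update 1 0
      have heq : Function.update w 1 0 = w' := by
        funext s
        rw [Function.update_apply]
      rw [heq] at h0
      have h1e : (1:ℝ) - ε = 0 - w 1 + 1 := by rw [hεdef]; ring
      rw [h1e]; exact h0
    have hbrep : ∀ x, (1-ε) * b x = ∑' s, w' s * h n (r s⁻¹ x) := by
      intro x
      have hsplit := Summable.tsum_eq_add_tsum_ite (hsum_wu n x) 1
      have hite : ∀ s : G, (if s = 1 then 0 else w s * h n (r s⁻¹ x))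
          = w' s * h n (r s⁻¹ x) := by
        intro s; by_cases hs : s = 1 <;> simp [hw'def, hs]
      have : h (n+1) x = ε * a x + ∑' s, w' s * h n (r s⁻¹ x) := by
        rw [hrec]
        rw [hsplit]
        congr 1
        · simp [hεdef, hr_one, hadef]
        · exact tsum_congr hite
      have hb' : (1-ε) * b x = h (n+1) x - ε * a x := by
        rw [hbdef]; field_simp
      rw [hb', this]; ring
    have hbpartial : ∀ T : Finset X, ∑ x ∈ T, (b x)^2 ≤ N n := by
      intro T
      have hcs := cs_aux w' hw'0 (1-ε) hw'sum (fun s x => h n (r s⁻¹ x))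
        (fun s x => hh0 _ _) (fun s x => hh1 _ _) (N n) (hN0 n) (huA n) T
      have : ∑ x ∈ T, ((1-ε) * b x)^2 ≤ (1-ε) * ((1-ε) * N n) := by
        calc ∑ x ∈ T, ((1-ε) * b x)^2
            = ∑ x ∈ T, (∑' s, w' s * h n (r s⁻¹ x))^2 :=
              Finset.sum_congr rfl (fun x _ => by rw [hbrep])
          _ ≤ (1-ε) * ((1-ε) * N n) := hcs
      have hexp : ∑ x ∈ T, ((1-ε) * b x)^2 = (1-ε)^2 * ∑ x ∈ T, (b x)^2 := by
        rw [Finset.mul_sum]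
        exact Finset.sum_congr rfl (fun x _ => by ring)
      have h2 : (1-ε)^2 * ∑ x ∈ T, (b x)^2 ≤ (1-ε)^2 * N n := by
        calc (1-ε)^2 * ∑ x ∈ T, (b x)^2 = ∑ x ∈ T, ((1-ε) * b x)^2 := hexp.symm
          _ ≤ (1-ε) * ((1-ε) * N n) := this
          _ = (1-ε)^2 * N n := by ring
      exact le_of_mul_le_mul_left h2 (pow_pos h1ε 2)
    have hsqb : Summable (fun x => (b x)^2) :=
      summable_of_sum_le (fun x => sq_nonneg _) hbpartial
    have htsumb : ∑' x, (b x)^2 ≤ N n :=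
      Summable.tsum_le_of_sum_le hsqb hbpartial
    -- parallelogram identity summed
    have hident : ∀ x, ε * (1-ε) * (a x - b x)^2
        = ε * (a x)^2 + (1-ε) * (b x)^2 - (h (n+1) x)^2 := by
      intro x
      rw [hbid x]; ring
    have hsumid : Summable (fun x => ε * (1-ε) * (a x - b x)^2) := by
      have : (fun x => ε * (1-ε) * (a x - b x)^2)
          = fun x => (ε * (a x)^2 + (1-ε) * (b x)^2) - (h (n+1) x)^2 := by
        funext x; rw [hident x]
      rw [this]
      exact (((hsq n).mul_left ε).add (hsqb.mul_left (1-ε))).sub (hsq (n+1))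
    have htsumid : ε * (1-ε) * (∑' x, (a x - b x)^2) ≤ N n - N (n+1) := by
      have e1 : ∑' x, ε * (1-ε) * (a x - b x)^2
          = ε * (∑' x, (a x)^2) + (1-ε) * (∑' x, (b x)^2) - ∑' x, (h (n+1) x)^2 := by
        calc ∑' x, ε * (1-ε) * (a x - b x)^2
            = ∑' x, ((ε * (a x)^2 + (1-ε) * (b x)^2) - (h (n+1) x)^2) :=
              tsum_congr (fun x => hident x)
          _ = (∑' x, (ε * (a x)^2 + (1-ε) * (b x)^2)) - ∑' x, (h (n+1) x)^2 :=
              Summable.tsum_sub (((hsq n).mul_left ε).add (hsqb.mul_left (1-ε))) (hsq (n+1))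
          _ = (ε * (∑' x, (a x)^2) + (1-ε) * (∑' x, (b x)^2)) - ∑' x, (h (n+1) x)^2 := by
              rw [Summable.tsum_add ((hsq n).mul_left ε) (hsqb.mul_left (1-ε)),
                tsum_mul_left, tsum_mul_left]
        -- done
      rw [tsum_mul_left] at e1
      have hNn1 : (∑' x, (h (n+1) x)^2) = N (n+1) := rfl
      have hNn : (∑' x, (a x)^2) = N n := rfl
      rw [hNn1, hNn] at e1
      nlinarith [e1, htsumb, hε]
    have hsum_ab : Summable (fun x => (a x - b x)^2) := by
      have hpos : (0:ℝ) < ε * (1-ε) := mul_pos hε h1ε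
      have := hsumid.mul_left (ε * (1-ε))⁻¹
      refine this.congr (fun x => ?_)
      field_simp
    have hterm : (a x₁ - b x₁)^2 ≤ ∑' x, (a x - b x)^2 :=
      Summable.le_tsum hsum_ab x₁ (fun y _ => sq_nonneg _)
    have hdiff : h (n+1) x₁ - h n x₁ = (1-ε) * (b x₁ - a x₁) := by
      rw [hbid x₁]; ring
    have hpos : (0:ℝ) < ε * (1-ε) := mul_pos hε h1ε
    have h2 : ε * (1-ε) * (a x₁ - b x₁)^2 ≤ N n - N (n+1) := by
      calc ε * (1-ε) * (a x₁ - b x₁)^2 ≤ ε * (1-ε) * ∑' x, (a x - b x)^2 :=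
            mul_le_mul_of_nonneg_left hterm hpos.le
        _ ≤ N n - N (n+1) := htsumid
    rw [hdiff]
    have : ((1-ε) * (b x₁ - a x₁))^2 = (1-ε)^2 * (a x₁ - b x₁)^2 := by ring
    rw [this]
    rw [div_mul_eq_mul_div, le_div_iff₀ hε]
    nlinarith [h2]
  -- N converges, so successive differences of h tend to 0
  have hNanti : Antitone N := antitone_nat_of_succ_le keyA
  have hNbdd : BddBelow (Set.range N) := ⟨0, fun y ⟨n, hn⟩ => hn ▸ hN0 n⟩
  have hNtend : Tendsto N atTop (nhds (⨅ n, N n)) := tendsto_atTop_ciInf hNanti hNbdd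
  have hNsucc : Tendsto (fun n => N (n+1)) atTop (nhds (⨅ n, N n)) :=
    hNtend.comp (tendsto_add_atTop_nat 1)
  have hdiffN : Tendsto (fun n => N n - N (n+1)) atTop (nhds 0) := by
    have := hNtend.sub hNsucc
    simpa using this
  have hd2 : ∀ x, Tendsto (fun n => (h (n+1) x - h n x)^2) atTop (nhds 0) := by
    intro x
    have hub : Tendsto (fun n => ((1-ε)/ε) * (N n - N (n+1))) atTop (nhds 0) := by
      have := hdiffN.const_mul ((1-ε)/ε)
      simpa using this
    exact tendsto_of_tendsto_of_tendsto_of_le_of_le tendsto_const_nhds hub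
      (fun n => sq_nonneg _) (fun n => keyB n x)
  have hd : ∀ x, Tendsto (fun n => h (n+1) x - h n x) atTop (nhds 0) := by
    intro x
    have habs : Tendsto (fun n => |h (n+1) x - h n x|) atTop (nhds 0) := by
      have hc : Tendsto Real.sqrt (nhds 0) (nhds 0) := by
        simpa [Real.sqrt_zero] using Real.continuous_sqrt.tendsto 0
      have := hc.comp (hd2 x)
      refine this.congr (fun n => ?_)
      simp [Function.comp, Real.sqrt_sq_eq_abs]
    have hneg := habs.neg
    rw [neg_zero] at hneg
    exact tendsto_of_tendsto_of_tendsto_of_le_of_le hneg habs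
      (fun n => neg_abs_le _) (fun n => le_abs_self _)
  -- now suppose the conclusion fails
  by_contra hcon
  rw [Metric.tendsto_atTop] at hcon
  push_neg at hcon
  obtain ⟨δ, hδ, hfreq⟩ := hcon
  have hfreq' : ∀ N₀ : ℕ, ∃ n ≥ N₀, δ ≤ h n x0 := by
    intro N₀
    obtain ⟨n, hn, hdist⟩ := hfreq N₀
    refine ⟨n, hn, ?_⟩
    rwa [Real.dist_eq, sub_zero, abs_of_nonneg (hh0 n x0)] at hdist
  set S : Set ℕ := {n | δ ≤ h n x0} with hSdef
  have hSneBot : (atTop ⊓ Filter.principal S).NeBot := by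
    rw [inf_principal_neBot_iff]
    intro U hU
    rw [mem_atTop_sets] at hU
    obtain ⟨a, ha⟩ := hU
    obtain ⟨n, hn, hmem⟩ := hfreq' a
    exact ⟨n, ha n hn, hmem⟩
  let U : Ultrafilter ℕ := Ultrafilter.of (atTop ⊓ Filter.principal S)
  have hUle : (U : Filter ℕ) ≤ atTop ⊓ Filter.principal S := Ultrafilter.of_le _
  have hU_atTop : (U : Filter ℕ) ≤ atTop := hUle.trans inf_le_left
  have hUS : S ∈ U := le_principal_iff.mp (hUle.trans inf_le_right)
  -- pointwise ultrafilter limits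
  have hlim : ∀ x : X, ∃ c, 0 ≤ c ∧ c ≤ 1 ∧ Tendsto (fun n => h n x) (U : Filter ℕ) (nhds c) := by
    intro x
    have hmem : (U.map (fun n => h n x) : Filter ℝ) ≤ Filter.principal (Set.Icc 0 1) := by
      rw [le_principal_iff]
      exact Filter.mem_map.mpr (Filter.univ_mem' (fun n => ⟨hh0 n x, hh1 n x⟩))
    obtain ⟨c, hc, hle⟩ := (isCompact_Icc (a := (0:ℝ)) (b := 1)).ultrafilter_le_nhds
      (U.map (fun n => h n x)) hmem
    exact ⟨c, hc.1, hc.2, hle⟩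
  choose HF hHF0 hHF1 hHFt using hlim
  have hHx0 : δ ≤ HF x0 := by
    refine ge_of_tendsto (hHFt x0) ?_
    exact Filter.eventually_iff.mpr hUS
  have hHfin : ∀ T : Finset X, ∑ x ∈ T, HF x ≤ 1 := by
    intro T
    refine le_of_tendsto (tendsto_finset_sum T (fun x _ => hHFt x)) ?_
    exact Filter.Eventually.of_forall (fun n => hfin n T)
  have station : ∀ x, HF x = ∑' s, w s * HF (r s⁻¹ x) := by
    intro x
    have t1 : Tendsto (fun n => h (n+1) x) (U : Filter ℕ) (nhds (HF x)) := by
      have := (hHFt x).add ((hd x).mono_left hU_atTop)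
      simp only [add_zero] at this
      refine this.congr (fun n => by ring)
    have t2 : Tendsto (fun n => ∑' s, w s * h n (r s⁻¹ x)) (U : Filter ℕ)
        (nhds (∑' s, w s * HF (r s⁻¹ x))) := by
      refine tendsto_tsum_of_dominated_convergence hwsum.summable
        (fun s => (hHFt (r s⁻¹ x)).const_mul (w s)) ?_
      refine Filter.Eventually.of_forall (fun n s => ?_)
      rw [Real.norm_eq_abs, abs_of_nonneg (mul_nonneg (hw0 s) (hh0 _ _))]
      exact mul_le_of_le_one_right (hw0 s) (hh1 _ _)
    exact tendsto_nhds_unique t1 (t2.congr (fun n => (hrec n x).symm))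
  -- the limit function attains a positive max
  set T0 : Set X := {x | δ ≤ HF x} with hT0def
  have hT0fin : T0.Finite := by
    by_contra hinf
    have hinf' : T0.Infinite := hinf
    set k : ℕ := Nat.ceil (1/δ) + 1 with hkdef
    obtain ⟨T, hTsub, hTcard⟩ := hinf'.exists_subset_card_eq k
    have hsum_ge : (k : ℝ) * δ ≤ ∑ x ∈ T, HF x := by
      have := Finset.card_nsmul_le_sum T HF δ (fun x hx => hTsub hx)
      rwa [hTcard, nsmul_eq_mul] at this
    have hk_gt : (1:ℝ) < (k:ℝ) * δ := by
      have h1 : (1/δ : ℝ) ≤ Nat.ceil (1/δ) := Nat.le_ceil _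
      have h2 : ((Nat.ceil (1/δ) : ℝ) + 1) * δ = (Nat.ceil (1/δ) : ℝ) * δ + δ := by ring
      have h3 : (k:ℝ) = (Nat.ceil (1/δ) : ℝ) + 1 := by
        rw [hkdef]; push_cast; ring
      rw [h3, h2]
      have h4 : (1/δ) * δ = 1 := by field_simp
      nlinarith
    linarith [hHfin T, hsum_ge]
  have hx0T0 : x0 ∈ T0 := hHx0
  obtain ⟨xm, hxmT, hxmmax⟩ := Finset.exists_max_image hT0fin.toFinset HF
    ⟨x0, hT0fin.mem_toFinset.mpr hx0T0⟩
  set m : ℝ := HF xm with hmdef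
  have hm_ge : δ ≤ m := hT0fin.mem_toFinset.mp hxmT
  have hm_pos : 0 < m := lt_of_lt_of_le hδ hm_ge
  have hmax : ∀ x, HF x ≤ m := by
    intro x
    by_cases hx : δ ≤ HF x
    · exact hxmmax x (hT0fin.mem_toFinset.mpr hx)
    · linarith [lt_of_not_ge hx]
  set B : Set X := {x | HF x = m} with hBdef
  have hBsub : B ⊆ T0 := fun x hx => by
    simp only [hBdef, Set.mem_setOf_eq] at hx
    simp only [hT0def, Set.mem_setOf_eq, hx]
    exact hm_ge
  have hBfin : B.Finite := hT0fin.subset hBsub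
  have hxmB : xm ∈ B := rfl
  have hsummb : ∀ x, Summable (fun s => w s * HF (r s⁻¹ x)) := by
    intro x
    refine hwsum.summable.of_nonneg_of_le
      (fun s => mul_nonneg (hw0 s) (hHF0 _)) (fun s => ?_)
    exact mul_le_of_le_one_right (hw0 s) (hHF1 _)
  have hclosed : ∀ x ∈ B, ∀ s : G, w s ≠ 0 → r s⁻¹ x ∈ B := by
    intro x hx s hws
    by_contra hnot
    have hlt : HF (r s⁻¹ x) < m := lt_of_le_of_ne (hmax _) hnot
    have hwpos : 0 < w s := lt_of_le_of_ne (hw0 s) (Ne.symm hws)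
    have hstrict : ∑' t, w t * HF (r t⁻¹ x) < ∑' t, w t * m := by
      refine Summable.tsum_lt_tsum (fun t => ?_) (mul_lt_mul_of_pos_left hlt hwpos)
        (hsummb x) (hwsum.summable.mul_right m)
      exact mul_le_mul_of_nonneg_left (hmax _) (hw0 t)
    rw [tsum_mul_right, hwsum.tsum_eq, one_mul] at hstrict
    rw [← station x, hx] at hstrict
    exact lt_irrefl m hstrict
  have hB_image : ∀ s : G, w s ≠ 0 → ∀ x ∈ B, r s x ∈ B := by
    intro s hws x hx
    set B' : Finset X := hBfin.toFinset with hB'def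
    have hmapsto : Finset.image (r s⁻¹) B' ⊆ B' := by
      intro y hy
      obtain ⟨z, hz, hzy⟩ := Finset.mem_image.mp hy
      rw [← hzy]
      exact hBfin.mem_toFinset.mpr (hclosed z (hBfin.mem_toFinset.mp hz) s hws)
    have hcard : B'.card ≤ (Finset.image (r s⁻¹) B').card := by
      rw [Finset.card_image_of_injective B' (hrinj s⁻¹)]
    have himg : Finset.image (r s⁻¹) B' = B' :=
      Finset.eq_of_subset_of_card_le hmapsto hcard
    have hxB' : x ∈ B' := hBfin.mem_toFinset.mpr hx
    rw [← himg] at hxB'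
    obtain ⟨y, hy, hyx⟩ := Finset.mem_image.mp hxB'
    have : r s x = y := by rw [← hyx, hrinv']
    rw [this]
    exact hBfin.mem_toFinset.mp hy
  -- the stabilizer of B is a subgroup containing the support, hence everything
  set K : Subgroup G :=
    { carrier := {g : G | ∀ x : X, x ∈ B ↔ r g x ∈ B}
      one_mem' := fun x => by rw [hr_one]
      mul_mem' := by
        intro g g' hg hg' x
        rw [← hr_mul]
        exact (hg x).trans (hg' (r g x))
      inv_mem' := by
        intro g hg x
        have := hg (r g⁻¹ x)
        rw [hrinv'] at this
        exact this.symm } with hKdef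
  have hsupp : {s : G | w s ≠ 0} ⊆ (K : Set G) := by
    intro s hs
    intro x
    constructor
    · exact fun hx => hB_image s hs x hx
    · intro hx
      have := hclosed (r s x) hx s hs
      rwa [hrinv] at this
  have hKtop : ∀ g : G, ∀ x : X, x ∈ B ↔ r g x ∈ B := by
    intro g
    have hle : Subgroup.closure {s : G | w s ≠ 0} ≤ K := (Subgroup.closure_le K).mpr hsupp
    rw [hirr] at hle
    exact hle (Subgroup.mem_top g)
  have hBuniv : ∀ y : X, y ∈ B := by
    intro y
    obtain ⟨g, hg⟩ := htrans xm y
    exact hg ▸ (hKtop g xm).mp hxmB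
  have : (Set.univ : Set X).Finite := hBfin.subset (fun y _ => hBuniv y)
  exact Set.infinite_univ this

lemma walk_eq_of_eq_on {G Ω Ω' : Type*} [Group G] (inc : ℕ → Ω → G) (inc' : ℕ → Ω' → G)
    (ω : Ω) (ω' : Ω') (n : ℕ) (hyp : ∀ i, 1 ≤ i → i ≤ n → inc i ω = inc' i ω') :
    walk inc ω n = walk inc' ω' n := by
  induction n with
  | zero => rfl
  | succ k ih =>
    show walk inc ω k * inc (k+1) ω = walk inc' ω' k * inc' (k+1) ω'
    rw [ih (fun i h1 h2 => hyp i h1 (h2.trans (Nat.le_succ k))),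
      hyp (k+1) (Nat.succ_le_succ (Nat.zero_le k)) (le_refl _)]

/-- for an irreducible measure `μ` with `μ(e) > 0`, a subgroup `H` of
infinite index and a finite set `F`, the probability `ℙ(w_n ∈ HF)` tends to `0`. -/
theorem prob_walk_in_coset_neighborhood_tendsto_zero
    {G Ω : Type*} [Group G] [Countable G] [MeasurableSpace G] [MeasurableSingletonClass G]
    [MeasurableSpace Ω] (P : Measure Ω) [IsProbabilityMeasure P]
    (μ : PMF G) (hirr : Subgroup.closure μ.support = ⊤) (he : 0 < μ 1)
    (H : Subgroup G) (hH : H.index = 0) (F : Finset G)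
    (inc : ℕ → Ω → G) (hmeas : ∀ i, Measurable (inc i))
    (hindep : iIndepFun inc P)
    (hid : ∀ i, Measure.map (inc i) P = μ.toMeasure) :
    Tendsto (fun n : ℕ => P {ω | ∃ h ∈ H, ∃ f ∈ F, walk inc ω n = h * f})
      atTop (nhds 0) := by
  classical
  -- measurability of the walk
  have hG_mul : MeasurableMul₂ G := ⟨measurable_of_countable _⟩
  have hwalkmeas : ∀ n, Measurable (fun ω => walk inc ω n) := by
    intro n
    induction n with
    | zero => exact measurable_const
    | succ k ih => exact ih.mul (hmeas (k+1))
  -- independence of walk n and inc (n+1)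
  have hindep_step : ∀ n, IndepFun (fun ω => walk inc ω n) (inc (n+1)) P := by
    intro n
    have hdisj : Disjoint (Finset.range (n+1)) ({n+1} : Finset ℕ) := by
      simp [Finset.disjoint_singleton_right]
    have base := hindep.indepFun_finset (Finset.range (n+1)) {n+1} hdisj hmeas
    set φ : ((i : (Finset.range (n+1) : Finset ℕ)) → G) → G :=
      fun v => walk (fun i (_ : Unit) =>
        if h : i ∈ Finset.range (n+1) then v ⟨i, h⟩ else 1) () n with hφdef
    set ψ : ((i : ({n+1} : Finset ℕ)) → G) → G :=
      fun v => v ⟨n+1, Finset.mem_singleton_self _⟩ with hψdef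
    have hφ : Measurable φ := measurable_of_countable _
    have hψ : Measurable ψ := measurable_pi_apply _
    have hcomp := base.comp hφ hψ
    have e1 : (φ ∘ fun ω (i : (Finset.range (n+1) : Finset ℕ)) => inc i ω)
        = fun ω => walk inc ω n := by
      funext ω
      refine walk_eq_of_eq_on _ _ _ _ _ (fun i h1 h2 => ?_)
      have hi : i ∈ Finset.range (n+1) := Finset.mem_range.mpr (Nat.lt_succ_of_le h2)
      simp [hi]
    have e2 : (ψ ∘ fun ω (i : ({n+1} : Finset ℕ)) => inc i ω) = inc (n+1) := rfl
    rw [e1, e2] at hcomp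
    exact hcomp
  -- the coset space
  set X := Quotient (QuotientGroup.rightRel H) with hXdef
  set π : G → X := Quotient.mk'' with hπdef
  have hπeq : ∀ a b : G, π a = π b ↔ b * a⁻¹ ∈ H := by
    intro a b
    rw [hπdef, Quotient.eq'']
    exact QuotientGroup.rightRel_apply
  set r : G → X → X := fun s => Quotient.map' (fun g => g * s) (by
    intro a b hab
    have h1 : b * a⁻¹ ∈ H := QuotientGroup.rightRel_apply.mp hab
    refine QuotientGroup.rightRel_apply.mpr ?_
    have : b * s * (a * s)⁻¹ = b * a⁻¹ := by group
    rw [this]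
    exact h1) with hrdef
  have hr_mk : ∀ (a s : G), r s (π a) = π (a * s) := fun a s => rfl
  have hr_mul : ∀ g g' x, r g' (r g x) = r (g * g') x := by
    intro g g' x
    induction x using Quotient.inductionOn' with
    | h a => show r g' (r g (π a)) = r (g * g') (π a)
             rw [hr_mk, hr_mk, hr_mk, mul_assoc]
  have hr_one : ∀ x, r 1 x = x := by
    intro x
    induction x using Quotient.inductionOn' with
    | h a => show r 1 (π a) = π a
             rw [hr_mk, mul_one]
  have htrans : ∀ x y : X, ∃ g, r g x = y := by
    intro x y
    induction x using Quotient.inductionOn' with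
    | h a =>
      induction y using Quotient.inductionOn' with
      | h b =>
        refine ⟨a⁻¹ * b, ?_⟩
        show r (a⁻¹ * b) (π a) = π b
        rw [hr_mk, ← mul_assoc, mul_inv_cancel, one_mul]
  have hrinv : ∀ (g : G) (x : X), r g⁻¹ (r g x) = x := by
    intro g x; rw [hr_mul, mul_inv_cancel, hr_one]
  -- infinitude of the coset space
  have hGHinf : Infinite (G ⧸ H) := by
    rcases Nat.card_eq_zero.mp hH with hemp | hinf
    · exact (hemp.false (QuotientGroup.mk (1:G))).elim
    · exact hinf
  have hXinf : Infinite X :=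
    Infinite.of_injective (QuotientGroup.quotientRightRelEquivQuotientLeftRel H).symm
      (Equiv.injective _)
  -- the distribution of the walk on the coset space
  set Ev : ℕ → X → Set Ω := fun n x => (fun ω => walk inc ω n) ⁻¹' {g | π g = x} with hEvdef
  have hEvmeas : ∀ n x, MeasurableSet (Ev n x) :=
    fun n x => hwalkmeas n ((Set.to_countable _).measurableSet)
  set E : ℕ → X → ℝ≥0∞ := fun n x => P (Ev n x) with hEdef
  have hEsum : ∀ n, ∑' x, E n x = 1 := by
    intro n
    have hdisj : Pairwise (Function.onFun Disjoint (Ev n)) := by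
      intro x y hxy
      refine Set.disjoint_left.mpr (fun ω hx hy => hxy ?_)
      exact hx.symm.trans hy
    have hcover : ⋃ x, Ev n x = Set.univ := by
      ext ω
      simp only [Set.mem_iUnion, Set.mem_univ, iff_true, hEvdef, Set.mem_preimage,
        Set.mem_setOf_eq]
      exact ⟨π (walk inc ω n), rfl⟩
    calc ∑' x, E n x = P (⋃ x, Ev n x) := (measure_iUnion hdisj (fun x => hEvmeas n x)).symm
      _ = 1 := by rw [hcover]; exact measure_univ
  have hErec : ∀ n x, E (n+1) x = ∑' s, μ s * E n (r s⁻¹ x) := by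
    intro n x
    have hsplit : Ev (n+1) x = ⋃ s : G, (Ev n (r s⁻¹ x) ∩ (inc (n+1)) ⁻¹' {s}) := by
      ext ω
      simp only [hEvdef, Set.mem_preimage, Set.mem_setOf_eq, Set.mem_iUnion,
        Set.mem_inter_iff, Set.mem_singleton_iff]
      have hwsucc : walk inc ω (n+1) = walk inc ω n * inc (n+1) ω := rfl
      constructor
      · intro hw
        refine ⟨inc (n+1) ω, ?_, rfl⟩
        have h1 : π (walk inc ω (n+1)) = r (inc (n+1) ω) (π (walk inc ω n)) := by
          rw [hwsucc, hr_mk]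
        have h2 : r (inc (n+1) ω) (π (walk inc ω n)) = x := by rw [← h1, hw]
        rw [← h2, hrinv]
      · rintro ⟨s, hw, hs⟩
        have h1 : π (walk inc ω (n+1)) = r s (π (walk inc ω n)) := by
          rw [hwsucc, hs, hr_mk]
        rw [h1, hw]
        have : r s (r s⁻¹ x) = x := by
          have := hrinv s⁻¹ x
          rwa [inv_inv] at this
        exact this
    have hdisj : Pairwise (Function.onFun Disjoint
        (fun s : G => Ev n (r s⁻¹ x) ∩ (inc (n+1)) ⁻¹' {s})) := by
      intro s t hst
      refine Set.disjoint_left.mpr (fun ω hs ht => hst ?_)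
      have h1 : inc (n+1) ω = s := hs.2
      have h2 : inc (n+1) ω = t := ht.2
      exact h1.symm.trans h2
    have hmeas' : ∀ s : G, MeasurableSet (Ev n (r s⁻¹ x) ∩ (inc (n+1)) ⁻¹' {s}) :=
      fun s => (hEvmeas n _).inter ((hmeas (n+1)) (measurableSet_singleton s))
    calc E (n+1) x = P (⋃ s : G, (Ev n (r s⁻¹ x) ∩ (inc (n+1)) ⁻¹' {s})) := by
          show P (Ev (n+1) x) = _
          rw [hsplit]
      _ = ∑' s : G, P (Ev n (r s⁻¹ x) ∩ (inc (n+1)) ⁻¹' {s}) := measure_iUnion hdisj hmeas'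
      _ = ∑' s : G, μ s * E n (r s⁻¹ x) := by
          refine tsum_congr (fun s => ?_)
          have hprod := (hindep_step n).measure_inter_preimage_eq_mul
            {g | π g = r s⁻¹ x} {s} ((Set.to_countable _).measurableSet)
            (measurableSet_singleton s)
          show P ((fun ω => walk inc ω n) ⁻¹' {g | π g = r s⁻¹ x} ∩ inc (n+1) ⁻¹' {s}) = _
          rw [hprod]
          have hone : P (inc (n+1) ⁻¹' {s}) = μ s := by
            rw [← Measure.map_apply (hmeas (n+1)) (measurableSet_singleton s), hid (n+1),
              PMF.toMeasure_apply_singleton _ _ (measurableSet_singleton s)]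
          rw [hone, mul_comm]
  -- convert to real numbers
  have hEne : ∀ n x, E n x ≠ ⊤ := fun n x => (measure_lt_top P _).ne
  have hEle1 : ∀ n x, E n x ≤ 1 := fun n x => prob_le_one
  set w : G → ℝ := fun s => (μ s).toReal with hwdef
  set h : ℕ → X → ℝ := fun n x => (E n x).toReal with hhdef
  have hw0 : ∀ s, 0 ≤ w s := fun s => ENNReal.toReal_nonneg
  have hwsum : HasSum w 1 := by
    have h1 : ∑' s, μ s = 1 := μ.tsum_coe
    have h2 := ENNReal.hasSum_toReal (f := (μ : G → ℝ≥0∞)) (by rw [h1]; exact ENNReal.one_ne_top)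
    have h3 : ∑' s : G, (μ s).toReal = 1 := by
      rw [← ENNReal.tsum_toReal_eq (fun s => PMF.apply_ne_top μ s), h1, ENNReal.toReal_one]
    rwa [h3] at h2
  have hirr' : Subgroup.closure {s : G | w s ≠ 0} = ⊤ := by
    have : {s : G | w s ≠ 0} = μ.support := by
      ext s
      simp only [Set.mem_setOf_eq, PMF.mem_support_iff, hwdef]
      rw [not_iff_not, ENNReal.toReal_eq_zero_iff]
      exact ⟨fun hh => hh.resolve_right (PMF.apply_ne_top μ s), fun hh => Or.inl hh⟩
    rw [this]
    exact hirr
  have hε : 0 < w 1 := ENNReal.toReal_pos (ne_of_gt he) (PMF.apply_ne_top μ 1)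
  have hh0 : ∀ n x, 0 ≤ h n x := fun n x => ENNReal.toReal_nonneg
  have hh1 : ∀ n x, h n x ≤ 1 := by
    intro n x
    have := ENNReal.toReal_mono ENNReal.one_ne_top (hEle1 n x)
    simpa using this
  have hfin : ∀ n (T : Finset X), ∑ x ∈ T, h n x ≤ 1 := by
    intro n T
    have h1 : ∑ x ∈ T, h n x = (∑ x ∈ T, E n x).toReal :=
      (ENNReal.toReal_sum (fun x _ => hEne n x)).symm
    rw [h1]
    have h2 : ∑ x ∈ T, E n x ≤ 1 := by
      calc ∑ x ∈ T, E n x ≤ ∑' x, E n x := ENNReal.sum_le_tsum T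
        _ = 1 := hEsum n
    have := ENNReal.toReal_mono ENNReal.one_ne_top h2
    simpa using this
  have hrec : ∀ n x, h (n+1) x = ∑' s, w s * h n (r s⁻¹ x) := by
    intro n x
    have h1 : h (n+1) x = (∑' s, μ s * E n (r s⁻¹ x)).toReal := by
      show (E (n+1) x).toReal = _
      rw [hErec n x]
    rw [h1, ENNReal.tsum_toReal_eq (fun s => ENNReal.mul_ne_top (PMF.apply_ne_top μ s)
      (hEne n _))]
    exact tsum_congr (fun s => ENNReal.toReal_mul)
  have main : ∀ x : X, Tendsto (fun n => h n x) atTop (nhds 0) :=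
    fun x => core_decay r hr_mul hr_one htrans w hw0 hwsum hirr' hε h hh0 hh1 hfin hrec x
  -- conclude
  have hbound : ∀ n, P {ω | ∃ h ∈ H, ∃ f ∈ F, walk inc ω n = h * f}
      ≤ ∑ f ∈ F, E n (π f) := by
    intro n
    have hsub : {ω | ∃ h ∈ H, ∃ f ∈ F, walk inc ω n = h * f}
        ⊆ ⋃ f ∈ F, Ev n (π f) := by
      rintro ω ⟨g, hgH, f, hfF, heq⟩
      refine Set.mem_biUnion hfF ?_
      show π (walk inc ω n) = π f
      refine (hπeq (walk inc ω n) f).mpr ?_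
      have : f * (walk inc ω n)⁻¹ = g⁻¹ := by rw [heq]; group
      rw [this]
      exact H.inv_mem hgH
    calc P {ω | ∃ h ∈ H, ∃ f ∈ F, walk inc ω n = h * f}
        ≤ P (⋃ f ∈ F, Ev n (π f)) := measure_mono hsub
      _ ≤ ∑ f ∈ F, P (Ev n (π f)) := measure_biUnion_finset_le F _
      _ = ∑ f ∈ F, E n (π f) := rfl
  have hlim : Tendsto (fun n => ∑ f ∈ F, E n (π f)) atTop (nhds 0) := by
    have hterm : ∀ f ∈ F, Tendsto (fun n => E n (π f)) atTop (nhds (0:ℝ≥0∞)) := by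
      intro f _
      have hofReal : ∀ n, E n (π f) = ENNReal.ofReal (h n (π f)) :=
        fun n => (ENNReal.ofReal_toReal (hEne n (π f))).symm
      have h2 : Tendsto (fun n => ENNReal.ofReal (h n (π f))) atTop (nhds (0:ℝ≥0∞)) := by
        have := ENNReal.tendsto_ofReal (main (π f))
        simpa using this
      exact h2.congr (fun n => (hofReal n).symm)
    have := tendsto_finset_sum F hterm
    simpa using this
  exact tendsto_of_tendsto_of_tendsto_of_le_of_le tendsto_const_nhds hlim
    (fun n => zero_le) hbound
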